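/- Method of Exchangeable Pairs. Let (X, X') be a matrix Stein pair in H_d × H_d with scale factor α, and let F : H_d → H_d be a measurable function satisfying E‖(X − X')·F(X)‖ < ∞. Then E[X·F(X)] = (1/(2α)) · E[(X − X')(F(X) − F(X'))]. -/

import Mathlib

open MeasureTheory
open scoped ComplexOrder Classical

noncomputable instance {m n : ℕ} : MeasurableSpace (Matrix (Fin m) (Fin n) ℂ) :=
  inferInstanceAs (MeasurableSpace (Fin m → Fin n → ℂ))

/-- The spectral norm (largest singular value) of a complex matrix. -/
noncomputable def specNorm {m n : ℕ} (A : Matrix (Fin m) (Fin n) ℂ) : ℝ :=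
  ‖LinearMap.toContinuousLinearMap (Matrix.toEuclideanLin A)‖

/-- The largest eigenvalue of a Hermitian matrix, via the Rayleigh quotient. -/
noncomputable def lmax {d : ℕ} (A : Matrix (Fin d) (Fin d) ℂ) : ℝ :=
  ⨆ x : Metric.sphere (0 : EuclideanSpace ℂ (Fin d)) 1,
    (inner ℂ ((x : EuclideanSpace ℂ (Fin d))) (Matrix.toEuclideanLin A x) : ℂ).re

/-- The smallest eigenvalue of a Hermitian matrix, via the Rayleigh quotient. -/
noncomputable def lmin {d : ℕ} (A : Matrix (Fin d) (Fin d) ℂ) : ℝ :=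
  ⨅ x : Metric.sphere (0 : EuclideanSpace ℂ (Fin d)) 1,
    (inner ℂ ((x : EuclideanSpace ℂ (Fin d))) (Matrix.toEuclideanLin A x) : ℂ).re

/-- The matrix exponential. -/
noncomputable def mexp {d : ℕ} (A : Matrix (Fin d) (Fin d) ℂ) : Matrix (Fin d) (Fin d) ℂ :=
  NormedSpace.exp A

/-- The Schatten `p`-norm `(tr |B|^p)^(1/p)` of a complex matrix, computed via the
eigenvalues of `Bᴴ * B`. -/
noncomputable def schattenNorm {d : ℕ} (p : ℝ) (B : Matrix (Fin d) (Fin d) ℂ) : ℝ :=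
  (∑ i, (Matrix.posSemidef_conjTranspose_mul_self B).isHermitian.eigenvalues i ^ (p / 2)) ^ (1 / p)

/-- The positive-semidefinite square root of a psd matrix (junk value `0` otherwise). -/
noncomputable def psdSqrt {d : ℕ} (M : Matrix (Fin d) (Fin d) ℂ) : Matrix (Fin d) (Fin d) ℂ :=
  if h : M.PosSemidef then
    (h.1.eigenvectorUnitary : Matrix (Fin d) (Fin d) ℂ) *
      Matrix.diagonal ((↑) ∘ (√·) ∘ h.1.eigenvalues) *
      (star h.1.eigenvectorUnitary : Matrix (Fin d) (Fin d) ℂ)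
  else 0

/-- The entrywise expectation of a random matrix. -/
noncomputable def matMean {Ω : Type*} [MeasurableSpace Ω] (μ : Measure Ω) {d : ℕ}
    (X : Ω → Matrix (Fin d) (Fin d) ℂ) : Matrix (Fin d) (Fin d) ℂ :=
  Matrix.of fun i j => ∫ ω, X ω i j ∂μ

/-- The normalized trace mgf `θ ↦ 𝔼 tr̄ exp (θ X)` of a random Hermitian matrix. -/
noncomputable def traceMgf {Ω : Type*} [MeasurableSpace Ω] (μ : Measure Ω) {d : ℕ}
    (X : Ω → Matrix (Fin d) (Fin d) ℂ) (θ : ℝ) : ℝ :=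
  ∫ ω, (Matrix.trace (mexp ((θ : ℂ) • X ω))).re / d ∂μ

/-- `(X, X') = (Ψ(Z), Ψ(Z'))` is a matrix Stein pair with scale factor `α`:
`(Z, Z')` is an exchangeable pair, `Ψ` takes Hermitian values,
`𝔼[X - X' ∣ Z] = α X` a.s., `α ∈ (0, 1]`, and `𝔼‖X‖² < ∞`. -/
structure IsMatrixSteinPair {Ω 𝒵 : Type*} [MeasurableSpace Ω] [MeasurableSpace 𝒵]
    {d : ℕ} (μ : Measure Ω) (Z Z' : Ω → 𝒵) (Ψ : 𝒵 → Matrix (Fin d) (Fin d) ℂ)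
    (α : ℝ) : Prop where
  measurable_fst : Measurable Z
  measurable_snd : Measurable Z'
  measurable_psi : ∀ i j, Measurable fun z => Ψ z i j
  hermitian : ∀ z, (Ψ z).IsHermitian
  exchangeable : μ.map (fun ω => (Z ω, Z' ω)) = μ.map fun ω => (Z' ω, Z ω)
  alpha_pos : 0 < α
  alpha_le_one : α ≤ 1
  stein : ∀ i j,
    μ[(fun ω => Ψ (Z ω) i j - Ψ (Z' ω) i j) | MeasurableSpace.comap Z inferInstance]
      =ᵐ[μ] fun ω => (α : ℂ) * Ψ (Z ω) i j
  memLp_two : ∀ i j, MemLp (fun ω => Ψ (Z ω) i j) 2 μ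

/-- The conditional variance `Δ_X = (1/(2α)) 𝔼[(X - X')² ∣ Z]` of a matrix Stein pair,
defined entrywise via conditional expectation with respect to `σ(Z)`. -/
noncomputable def condVar {Ω 𝒵 : Type*} [MeasurableSpace Ω] [MeasurableSpace 𝒵]
    {d : ℕ} (μ : Measure Ω) (Z Z' : Ω → 𝒵) (Ψ : 𝒵 → Matrix (Fin d) (Fin d) ℂ)
    (α : ℝ) : Ω → Matrix (Fin d) (Fin d) ℂ := fun ω =>
  Matrix.of fun i j => (1 / (2 * α) : ℂ) *
    (μ[(fun ω' => ((Ψ (Z ω') - Ψ (Z' ω')) * (Ψ (Z ω') - Ψ (Z' ω'))) i j)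
      | MeasurableSpace.comap Z inferInstance]) ω

/-- `s ↦ s log s` (with `0 log 0 = 0`) applied to the eigenvalues of a Hermitian matrix
(junk value `0` otherwise). -/
noncomputable def matLogSelf {d : ℕ} (M : Matrix (Fin d) (Fin d) ℂ) : Matrix (Fin d) (Fin d) ℂ :=
  if h : M.IsHermitian then h.cfc (fun x => x * Real.log x) else 0

/-! Conditioning on `Z` and pulling out the `σ(Z)`-measurable factor `F(X)` turns the Stein
condition `𝔼[X - X' ∣ Z] = α X` into `𝔼[(X - X') F(X)] = α 𝔼[X F(X)]`, while exchangeability of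
`(Z, Z')` gives `𝔼[(X - X') F(X')] = -𝔼[(X - X') F(X)]`; subtracting the two yields the identity.
The pull-out is done entrywise: the `(i, j)` entry of `(X - X') F(X)` is the pairing of row `i`
of `X - X'` with column `j` of `F(X)`, and only this pairing, not each of its `d` terms, is known
to be integrable. -/

theorem norm_apply_le_specNorm {m n : ℕ} (A : Matrix (Fin m) (Fin n) ℂ) (i : Fin m) (j : Fin n) :
    ‖A i j‖ ≤ specNorm A := by
  set L := LinearMap.toContinuousLinearMap (Matrix.toEuclideanLin A)
  have hcol : L (EuclideanSpace.single j 1) i = A i j := by simp [L]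
  calc ‖A i j‖ = ‖L (EuclideanSpace.single j 1) i‖ := by rw [hcol]
    _ ≤ ‖L (EuclideanSpace.single j 1)‖ := PiLp.norm_apply_le _ i
    _ ≤ ‖L‖ * ‖EuclideanSpace.single j (1 : ℂ)‖ := L.le_opNorm _
    _ = specNorm A := by simp [specNorm, L]

noncomputable def dotProductCLM (ι R : Type*) [Fintype ι] [NormedRing R] [NormedAlgebra ℝ R] :
    (ι → R) →L[ℝ] (ι → R) →L[ℝ] R :=
  ∑ k, (ContinuousLinearMap.mul ℝ R).bilinearComp (.proj k) (.proj k)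

@[simp]
theorem dotProductCLM_apply {ι R : Type*} [Fintype ι] [NormedRing R] [NormedAlgebra ℝ R]
    (u v : ι → R) : dotProductCLM ι R u v = u ⬝ᵥ v := by
  simp [dotProductCLM, dotProduct]

section Exchangeable

variable {Ω 𝒵 E : Type*} [MeasurableSpace Ω] [MeasurableSpace 𝒵] [NormedAddCommGroup E]
  {μ : Measure Ω} {Z Z' : Ω → 𝒵} {φ : 𝒵 × 𝒵 → E}

theorem MeasureTheory.Integrable.comp_swap_of_exchangeable (hZ : Measurable Z)
    (hZ' : Measurable Z') (hexch : μ.map (fun ω ↦ (Z ω, Z' ω)) = μ.map fun ω ↦ (Z' ω, Z ω))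
    (hφ : StronglyMeasurable φ) (hint : Integrable (fun ω ↦ φ (Z ω, Z' ω)) μ) :
    Integrable (fun ω ↦ φ (Z' ω, Z ω)) μ := by
  have h := (integrable_map_measure hφ.aestronglyMeasurable (hZ.prodMk hZ').aemeasurable).2 hint
  rw [hexch] at h
  exact (integrable_map_measure hφ.aestronglyMeasurable (hZ'.prodMk hZ).aemeasurable).1 h

theorem integral_comp_swap_of_exchangeable [NormedSpace ℝ E] (hZ : Measurable Z)
    (hZ' : Measurable Z') (hexch : μ.map (fun ω ↦ (Z ω, Z' ω)) = μ.map fun ω ↦ (Z' ω, Z ω))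
    (hφ : StronglyMeasurable φ) :
    ∫ ω, φ (Z' ω, Z ω) ∂μ = ∫ ω, φ (Z ω, Z' ω) ∂μ := by
  rw [← integral_map (hZ'.prodMk hZ).aemeasurable hφ.aestronglyMeasurable, ← hexch,
    integral_map (hZ.prodMk hZ').aemeasurable hφ.aestronglyMeasurable]

end Exchangeable

theorem integral_bilin_condExp_of_stronglyMeasurable_right {Ω E F G : Type*}
    {m mΩ : MeasurableSpace Ω} {μ : Measure Ω} [NormedAddCommGroup E] [NormedSpace ℝ E]
    [NormedAddCommGroup F] [NormedSpace ℝ F] [CompleteSpace F] [NormedAddCommGroup G]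
    [NormedSpace ℝ G] [CompleteSpace G] (B : F →L[ℝ] E →L[ℝ] G) {f : Ω → F} {g : Ω → E}
    (hm : m ≤ mΩ) [SigmaFinite (μ.trim hm)] (hg : StronglyMeasurable[m] g)
    (hfg : Integrable (fun ω ↦ B (f ω) (g ω)) μ) (hf : Integrable f μ) :
    ∫ ω, B (μ[f | m] ω) (g ω) ∂μ = ∫ ω, B (f ω) (g ω) ∂μ := by
  rw [← integral_congr_ae (condExp_bilin_of_stronglyMeasurable_right B hg hfg hf),
    integral_condExp hm]

theorem condExp_pi_ae_eq {Ω ι : Type*} [Fintype ι] {E : ι → Type*}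
    [∀ k, NormedAddCommGroup (E k)] [∀ k, NormedSpace ℝ (E k)] [∀ k, CompleteSpace (E k)]
    {m mΩ : MeasurableSpace Ω} {μ : Measure Ω} {f : Ω → ∀ k, E k} (hf : Integrable f μ) :
    μ[f | m] =ᵐ[μ] fun ω k ↦ μ[fun ω' ↦ f ω' k | m] ω := by
  have h : ∀ k, (fun ω ↦ μ[f | m] ω k) =ᵐ[μ] μ[fun ω' ↦ f ω' k | m] := fun k ↦
    (ContinuousLinearMap.proj (R := ℝ) (φ := E) k).comp_condExp_comm hf
  filter_upwards [ae_all_iff.2 h] with ω hω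
  exact funext hω

theorem measurable_matrix_of_apply {α : Type*} [MeasurableSpace α] {m n : ℕ}
    {A : α → Matrix (Fin m) (Fin n) ℂ} (h : ∀ i j, Measurable fun x ↦ A x i j) : Measurable A :=
  measurable_pi_lambda _ fun i ↦ measurable_pi_lambda _ (h i)

theorem Measurable.matrix_mul {α : Type*} [MeasurableSpace α] {l m n : ℕ}
    {A : α → Matrix (Fin l) (Fin m) ℂ} {B : α → Matrix (Fin m) (Fin n) ℂ}
    (hA : Measurable A) (hB : Measurable B) : Measurable fun x ↦ A x * B x :=
  measurable_matrix_of_apply fun i j ↦ by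
    simp only [Matrix.mul_apply]
    exact Finset.measurable_sum _ fun k _ ↦ hA.eval.eval.mul hB.eval.eval

theorem Measurable.matrix_sub {α : Type*} [MeasurableSpace α] {m n : ℕ}
    {A B : α → Matrix (Fin m) (Fin n) ℂ} (hA : Measurable A) (hB : Measurable B) :
    Measurable fun x ↦ A x - B x :=
  measurable_matrix_of_apply fun _ _ ↦ hA.eval.eval.sub hB.eval.eval

theorem integrable_and_integral_sub_mul_comp_swap {Ω 𝒵 : Type*} [MeasurableSpace Ω]
    [MeasurableSpace 𝒵] {μ : Measure Ω} {l m n : ℕ} {Z Z' : Ω → 𝒵}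
    {Ψ : 𝒵 → Matrix (Fin l) (Fin m) ℂ} {M : 𝒵 → Matrix (Fin m) (Fin n) ℂ}
    (hZ : Measurable Z) (hZ' : Measurable Z')
    (hexch : μ.map (fun ω ↦ (Z ω, Z' ω)) = μ.map fun ω ↦ (Z' ω, Z ω))
    (hΨ : Measurable Ψ) (hM : Measurable M) (i : Fin l) (j : Fin n)
    (hint : Integrable (fun ω ↦ ((Ψ (Z ω) - Ψ (Z' ω)) * M (Z ω)) i j) μ) :
    Integrable (fun ω ↦ ((Ψ (Z ω) - Ψ (Z' ω)) * M (Z' ω)) i j) μ ∧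
      ∫ ω, ((Ψ (Z ω) - Ψ (Z' ω)) * M (Z' ω)) i j ∂μ
        = -∫ ω, ((Ψ (Z ω) - Ψ (Z' ω)) * M (Z ω)) i j ∂μ := by
  set φ : 𝒵 × 𝒵 → ℂ := fun z ↦ ((Ψ z.1 - Ψ z.2) * M z.1) i j
  have hφ : StronglyMeasurable φ :=
    (((hΨ.comp measurable_fst).matrix_sub (hΨ.comp measurable_snd)).matrix_mul
      (hM.comp measurable_fst)).eval.eval.stronglyMeasurable
  have hswap : ∀ ω, ((Ψ (Z ω) - Ψ (Z' ω)) * M (Z' ω)) i j = -φ (Z' ω, Z ω) := fun ω ↦ by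
    simp only [φ, ← neg_sub (Ψ (Z ω)), Matrix.neg_mul, Matrix.neg_apply, neg_neg]
  simp only [hswap, integral_neg, integral_comp_swap_of_exchangeable hZ hZ' hexch hφ]
  exact ⟨(hint.comp_swap_of_exchangeable hZ hZ' hexch hφ).neg, rfl⟩

namespace IsMatrixSteinPair

variable {Ω 𝒵 : Type*} [MeasurableSpace Ω] [MeasurableSpace 𝒵] {μ : Measure Ω} {d : ℕ}
  {Z Z' : Ω → 𝒵} {Ψ : 𝒵 → Matrix (Fin d) (Fin d) ℂ} {α : ℝ}

theorem integrable_snd_apply [IsFiniteMeasure μ] (h : IsMatrixSteinPair μ Z Z' Ψ α)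
    (i k : Fin d) : Integrable (fun ω ↦ Ψ (Z' ω) i k) μ :=
  ((h.memLp_two i k).integrable one_le_two).comp_swap_of_exchangeable (φ := fun z ↦ Ψ z.1 i k)
    h.measurable_fst h.measurable_snd h.exchangeable
    ((h.measurable_psi i k).comp _root_.measurable_fst).stronglyMeasurable

theorem integrable_row_sub [IsFiniteMeasure μ] (h : IsMatrixSteinPair μ Z Z' Ψ α) (i : Fin d) :
    Integrable (fun ω k ↦ Ψ (Z ω) i k - Ψ (Z' ω) i k) μ :=
  Integrable.of_eval fun k ↦
    ((h.memLp_two i k).integrable one_le_two).sub (h.integrable_snd_apply i k)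

theorem condExp_row_sub [IsFiniteMeasure μ] (h : IsMatrixSteinPair μ Z Z' Ψ α) (i : Fin d) :
    μ[fun ω k ↦ Ψ (Z ω) i k - Ψ (Z' ω) i k | MeasurableSpace.comap Z inferInstance]
      =ᵐ[μ] fun ω ↦ (α : ℂ) • Ψ (Z ω) i := by
  filter_upwards [condExp_pi_ae_eq (h.integrable_row_sub i), ae_all_iff.2 (h.stein i)]
    with ω hω hstein
  ext k
  exact (congrFun hω k).trans (hstein k)

theorem integral_sub_mul_eq [IsFiniteMeasure μ] (h : IsMatrixSteinPair μ Z Z' Ψ α)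
    {M : 𝒵 → Matrix (Fin d) (Fin d) ℂ} (hM : Measurable M) (i j : Fin d)
    (hint : Integrable (fun ω ↦ ((Ψ (Z ω) - Ψ (Z' ω)) * M (Z ω)) i j) μ) :
    ∫ ω, ((Ψ (Z ω) - Ψ (Z' ω)) * M (Z ω)) i j ∂μ = α * ∫ ω, (Ψ (Z ω) * M (Z ω)) i j ∂μ := by
  have hm := h.measurable_fst.comap_le
  set B := dotProductCLM (Fin d) ℂ
  set row : Ω → Fin d → ℂ := fun ω k ↦ Ψ (Z ω) i k - Ψ (Z' ω) i k
  set col : Ω → Fin d → ℂ := fun ω k ↦ M (Z ω) k j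
  have hcol : StronglyMeasurable[MeasurableSpace.comap Z inferInstance] col :=
    ((measurable_pi_lambda _ fun _ ↦ hM.eval.eval).comp (comap_measurable Z)).stronglyMeasurable
  have hp : ∀ ω, ((Ψ (Z ω) - Ψ (Z' ω)) * M (Z ω)) i j = B (row ω) (col ω) := fun ω ↦ by
    rw [dotProductCLM_apply, Matrix.mul_apply']
    rfl
  have hq : (fun ω ↦ B (μ[row | MeasurableSpace.comap Z inferInstance] ω) (col ω))
      =ᵐ[μ] fun ω ↦ (α : ℂ) * (Ψ (Z ω) * M (Z ω)) i j := by
    have hrow : μ[row | MeasurableSpace.comap Z inferInstance] =ᵐ[μ] fun ω ↦ (α : ℂ) • Ψ (Z ω) i :=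
      h.condExp_row_sub i
    filter_upwards [hrow] with ω hω
    simp [hω, B, col, Matrix.mul_apply']
  have hint' : Integrable (fun ω ↦ B (row ω) (col ω)) μ := by simpa only [hp] using hint
  calc ∫ ω, ((Ψ (Z ω) - Ψ (Z' ω)) * M (Z ω)) i j ∂μ
      = ∫ ω, B (row ω) (col ω) ∂μ := by simp only [hp]
    _ = ∫ ω, B (μ[row | MeasurableSpace.comap Z inferInstance] ω) (col ω) ∂μ :=
      (integral_bilin_condExp_of_stronglyMeasurable_right B hm hcol hint'
        (h.integrable_row_sub i)).symm
    _ = ∫ ω, (α : ℂ) * (Ψ (Z ω) * M (Z ω)) i j ∂μ := by rw [integral_congr_ae hq]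
    _ = α * ∫ ω, (Ψ (Z ω) * M (Z ω)) i j ∂μ := integral_const_mul _ _

end IsMatrixSteinPair

theorem method_of_exchangeable_pairs_general
    {Ω 𝒵 : Type*} [MeasurableSpace Ω] [MeasurableSpace 𝒵]
    (μ : Measure Ω) [IsProbabilityMeasure μ] {d : ℕ}
    (Z Z' : Ω → 𝒵) (Ψ : 𝒵 → Matrix (Fin d) (Fin d) ℂ) (α : ℝ)
    (hpair : IsMatrixSteinPair μ Z Z' Ψ α)
    (F : Matrix (Fin d) (Fin d) ℂ → Matrix (Fin d) (Fin d) ℂ)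
    (hFmeas : ∀ i j, Measurable fun A : Matrix (Fin d) (Fin d) ℂ => F A i j)
    (hreg : Integrable (fun ω => specNorm ((Ψ (Z ω) - Ψ (Z' ω)) * F (Ψ (Z ω)))) μ) :
    ∀ i j, ∫ ω, (Ψ (Z ω) * F (Ψ (Z ω))) i j ∂μ
      = (1 / (2 * (α : ℂ))) *
          ∫ ω, ((Ψ (Z ω) - Ψ (Z' ω)) * (F (Ψ (Z ω)) - F (Ψ (Z' ω)))) i j ∂μ := by
  intro i j
  have hΨ : Measurable Ψ := measurable_matrix_of_apply hpair.measurable_psi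
  have hFΨ : Measurable fun z ↦ F (Ψ z) := (measurable_matrix_of_apply hFmeas).comp hΨ
  have hp_meas : Measurable fun ω ↦ ((Ψ (Z ω) - Ψ (Z' ω)) * F (Ψ (Z ω))) i j :=
    (((hΨ.comp hpair.measurable_fst).matrix_sub (hΨ.comp hpair.measurable_snd)).matrix_mul
      (hFΨ.comp hpair.measurable_fst)).eval.eval
  have hp : Integrable (fun ω ↦ ((Ψ (Z ω) - Ψ (Z' ω)) * F (Ψ (Z ω))) i j) μ :=
    hreg.mono' hp_meas.aestronglyMeasurable (ae_of_all _ fun ω ↦ norm_apply_le_specNorm _ i j)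
  have hstein := hpair.integral_sub_mul_eq hFΨ i j hp
  obtain ⟨hr, hswap⟩ := integrable_and_integral_sub_mul_comp_swap hpair.measurable_fst
    hpair.measurable_snd hpair.exchangeable hΨ hFΨ i j hp
  have hα : (α : ℂ) ≠ 0 := by exact_mod_cast hpair.alpha_pos.ne'
  simp only [Matrix.mul_sub, Matrix.sub_apply]
  rw [integral_sub hp hr, hswap, hstein]
  field_simp
  ring

/-- **Method of Exchangeable Pairs.**  If `(X, X') = (Ψ(Z), Ψ(Z'))` is a matrix Stein pair
with scale factor `α` and `F` is a measurable matrix function with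
`𝔼‖(X - X')·F(X)‖ < ∞`, then `𝔼[X·F(X)] = (1/(2α)) 𝔼[(X - X')(F(X) - F(X'))]`
(as an identity of matrices, stated entrywise). -/
theorem method_of_exchangeable_pairs
    {Ω 𝒵 : Type*} [MeasurableSpace Ω] [TopologicalSpace 𝒵] [PolishSpace 𝒵]
    [MeasurableSpace 𝒵] [BorelSpace 𝒵]
    (μ : Measure Ω) [IsProbabilityMeasure μ] {d : ℕ}
    (Z Z' : Ω → 𝒵) (Ψ : 𝒵 → Matrix (Fin d) (Fin d) ℂ) (α : ℝ)
    (hpair : IsMatrixSteinPair μ Z Z' Ψ α)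
    (F : Matrix (Fin d) (Fin d) ℂ → Matrix (Fin d) (Fin d) ℂ)
    (hFmeas : ∀ i j, Measurable fun A : Matrix (Fin d) (Fin d) ℂ => F A i j)
    (hreg : Integrable (fun ω => specNorm ((Ψ (Z ω) - Ψ (Z' ω)) * F (Ψ (Z ω)))) μ) :
    ∀ i j, ∫ ω, (Ψ (Z ω) * F (Ψ (Z ω))) i j ∂μ
      = (1 / (2 * (α : ℂ))) *
          ∫ ω, ((Ψ (Z ω) - Ψ (Z' ω)) * (F (Ψ (Z ω)) - F (Ψ (Z' ω)))) i j ∂μ :=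
  method_of_exchangeable_pairs_general μ Z Z' Ψ α hpair F hFmeas hreg
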